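/- Set M⁺ = max over (a,b) ∈ 𝒜×ℬ and x,y ∈ X of Funk(T_{ab}(x), y), and M⁻ = the corresponding minimum. If (w, λ) ∈ Lip₁(X_h) × ℝ is an additive eigenpair of F̂_h^+ (F̂_h^+ w = λ + w), then M⁻ ≤ λ ≤ M⁺ and ‖w‖_H ≤ M⁺ − λ ≤ M⁺ − M⁻, where ‖w‖_H = max_j w(x_j) − min_j w(x_j) is the Hilbert seminorm. -/

import Mathlib

open Set Filter

/-- The Funk hemi-metric on a cone `C`. -/
noncomputable def funk {n : ℕ} (C : Set (Fin n → ℝ)) (x y : Fin n → ℝ) : ℝ :=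
  Real.log (sInf {l : ℝ | 0 < l ∧ l • y - x ∈ C})

/-- The dual cone of `C`. -/
def dualCone {n : ℕ} (C : Set (Fin n → ℝ)) : Set (Fin n → ℝ) :=
  {y | ∀ x ∈ C, 0 ≤ dotProduct x y}

/-- The cross-section `X = K ∩ Δ` of the small cone `K`,
where `Δ = {x | ⟨x, e*⟩ = 1}`. -/
def crossSec {n : ℕ} (K : Set (Fin n → ℝ)) (estar : Fin n → ℝ) : Set (Fin n → ℝ) :=
  {x ∈ K | dotProduct x estar = 1}

/-- The operator
`F v (x) = inf_a sup_b [log⟨T_{ab}(x), e*⟩ + v (T_{ab}(x)/⟨T_{ab}(x), e*⟩)]`. -/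
noncomputable def Fop {n : ℕ} {E : Type*} (A B : Set E)
    (T : E → E → (Fin n → ℝ) → (Fin n → ℝ)) (estar : Fin n → ℝ)
    (v : (Fin n → ℝ) → ℝ) (x : Fin n → ℝ) : ℝ :=
  ⨅ a : A, ⨆ b : B, (Real.log (dotProduct (T a b x) estar) +
    v ((dotProduct (T a b x) estar)⁻¹ • T a b x))

/-- The interpolation operator `I_h^+ v (x) = min_{y ∈ X_h} [v(y) + Funk(x,y)]`. -/
noncomputable def Ih {n : ℕ} (C : Set (Fin n → ℝ)) (Xh : Finset (Fin n → ℝ))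
    (hne : Xh.Nonempty) (v : (Fin n → ℝ) → ℝ) (x : Fin n → ℝ) : ℝ :=
  Xh.inf' hne (fun y => v y + funk C x y)

/-- The Hilbert seminorm on functions on the grid:
`‖v‖_H = max_{x ∈ X_h} v(x) - min_{x ∈ X_h} v(x)`. -/
noncomputable def hsemi {n : ℕ} (Xh : Finset (Fin n → ℝ)) (hne : Xh.Nonempty)
    (f : (Fin n → ℝ) → ℝ) : ℝ :=
  Xh.sup' hne f - Xh.inf' hne f

/-- The set of values `Funk(T_{ab}(x), y)` for `a ∈ 𝒜`, `b ∈ ℬ`, `x, y ∈ X`;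
`M⁺` and `M⁻` are its supremum and infimum. -/
def MSet {n : ℕ} {E : Type*} (C K : Set (Fin n → ℝ)) (estar : Fin n → ℝ)
    (A B : Set E) (T : E → E → (Fin n → ℝ) → (Fin n → ℝ)) : Set ℝ :=
  {r | ∃ a ∈ A, ∃ b ∈ B, ∃ x ∈ crossSec K estar, ∃ y ∈ crossSec K estar,
    r = funk C (T a b x) y}

/-!
Every value of `F̂_h^+ w` at a grid point is an inf-sup over `(a, b)` of
`min_{y ∈ X_h} [w(y) + Funk(T_{ab}(x), y)]`, because rescaling `T_{ab}(x)` onto `Δ` shifts the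
Funk hemi-metric by exactly `log⟨T_{ab}(x), e*⟩`. Each such minimum lies between
`min w + M⁻` and `min w + M⁺`, hence so does `λ + w(x)` for every grid point `x`; evaluating at
a minimiser of `w` gives `M⁻ ≤ λ ≤ M⁺`, at a maximiser `max w - min w ≤ M⁺ - λ`.
The work lies in showing that `M⁻` and `M⁺` are finite: `e* ∈ int C*` makes `X` compact and
keeps `⟨·, e*⟩` away from `0` on the compact set `T(X) ⊆ int C`, and a thickening of `X`
inside `int C` gives a uniform `L` with `T_{ab}(x) ≤_C L y` for all `x, y ∈ X`.
-/

section Order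

theorem ciSup_mem_Icc_of_forall {α ι : Type*} [ConditionallyCompleteLattice α] [Nonempty ι]
    {f : ι → α} {lo hi : α} (hf : ∀ i, f i ∈ Icc lo hi) : ⨆ i, f i ∈ Icc lo hi :=
  ⟨le_ciSup_of_le ⟨hi, forall_mem_range.mpr fun i => (hf i).2⟩ (Classical.arbitrary ι)
      (hf _).1,
    ciSup_le fun i => (hf i).2⟩

theorem ciInf_mem_Icc_of_forall {α ι : Type*} [ConditionallyCompleteLattice α] [Nonempty ι]
    {f : ι → α} {lo hi : α} (hf : ∀ i, f i ∈ Icc lo hi) : ⨅ i, f i ∈ Icc lo hi :=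
  ⟨le_ciInf fun i => (hf i).1,
    ciInf_le_of_le ⟨lo, forall_mem_range.mpr fun i => (hf i).1⟩ (Classical.arbitrary ι)
      (hf _).2⟩

theorem Finset.inf'_add_mem_Icc {ι α : Type*} [LinearOrder α] [AddCommMonoid α]
    [IsOrderedAddMonoid α] {s : Finset ι} (hs : s.Nonempty) (f : ι → α) {g : ι → α}
    {lo hi : α} (hg : ∀ i ∈ s, g i ∈ Set.Icc lo hi) :
    s.inf' hs (fun i => f i + g i) ∈ Set.Icc (s.inf' hs f + lo) (s.inf' hs f + hi) := by
  refine ⟨Finset.le_inf' _ _ fun i his => add_le_add (Finset.inf'_le f his) (hg i his).1, ?_⟩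
  obtain ⟨i, his, hfi⟩ := s.exists_mem_eq_inf' hs f
  calc s.inf' hs (fun i => f i + g i) ≤ f i + g i := Finset.inf'_le _ his
    _ ≤ s.inf' hs f + hi := by rw [hfi]; exact add_le_add le_rfl (hg i his).2

theorem Finset.mem_Icc_and_sup'_sub_inf'_le {ι : Type*} {s : Finset ι} (hs : s.Nonempty)
    (w : ι → ℝ) {l lo hi : ℝ}
    (h : ∀ x ∈ s, l + w x ∈ Set.Icc (s.inf' hs w + lo) (s.inf' hs w + hi)) :
    l ∈ Set.Icc lo hi ∧ s.sup' hs w - s.inf' hs w ≤ hi - l := by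
  obtain ⟨xmin, hxmin, hmin⟩ := s.exists_mem_eq_inf' hs w
  obtain ⟨xmax, hxmax, hmax⟩ := s.exists_mem_eq_sup' hs w
  have hlo := h xmin hxmin
  have hhi := h xmax hxmax
  rw [← hmin] at hlo
  rw [← hmax] at hhi
  exact ⟨⟨by linarith [hlo.1], by linarith [hlo.2]⟩, by linarith [hhi.2]⟩

theorem mem_Icc_csInf_csSup {α : Type*} [ConditionallyCompleteLattice α] {S : Set α}
    {lo hi : α} (hS : S ⊆ Icc lo hi) {x : α} (hx : x ∈ S) : x ∈ Icc (sInf S) (sSup S) :=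
  ⟨csInf_le (bddBelow_Icc.mono hS) hx, le_csSup (bddAbove_Icc.mono hS) hx⟩

end Order

section Cone

variable {n : ℕ} {C : Set (Fin n → ℝ)}

theorem sq_norm_le_dotProduct_self (x : Fin n → ℝ) : ‖x‖ ^ 2 ≤ x ⬝ᵥ x := by
  have hsum : 0 ≤ x ⬝ᵥ x := Finset.sum_nonneg fun i _ => mul_self_nonneg (x i)
  refine (Real.le_sqrt (norm_nonneg x) hsum).mp ((pi_norm_le_iff_of_nonneg (Real.sqrt_nonneg _)).mpr
    fun i => (Real.le_sqrt (norm_nonneg _) hsum).mpr ?_)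
  rw [Real.norm_eq_abs, sq_abs, sq]
  exact Finset.single_le_sum (f := fun i => x i * x i) (fun i _ => mul_self_nonneg (x i))
    (Finset.mem_univ i)

theorem exists_pos_mul_norm_le_dotProduct {e : Fin n → ℝ} (he : e ∈ interior (dualCone C)) :
    ∃ m > 0, ∀ x ∈ C, m * ‖x‖ ≤ x ⬝ᵥ e := by
  obtain ⟨ε, hε, hball⟩ := Metric.mem_nhds_iff.mp (mem_interior_iff_mem_nhds.mp he)
  refine ⟨ε / 2, half_pos hε, fun x hx => ?_⟩
  rcases eq_or_ne x 0 with rfl | hx0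
  · simp
  have hnorm : 0 < ‖x‖ := norm_pos_iff.mpr hx0
  set t := ε / 2 / ‖x‖
  have ht : t * ‖x‖ = ε / 2 := div_mul_cancel₀ _ hnorm.ne'
  have hmem : e - t • x ∈ dualCone C := hball (by
    rw [Metric.mem_ball, dist_eq_norm, sub_sub_cancel_left, norm_neg, norm_smul,
      Real.norm_eq_abs, abs_of_pos (by positivity), ht]
    linarith)
  have hdual := hmem x hx
  rw [dotProduct_sub, dotProduct_smul, smul_eq_mul] at hdual
  calc ε / 2 * ‖x‖ = t * ‖x‖ ^ 2 := by rw [sq, ← mul_assoc, ht]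
    _ ≤ t * (x ⬝ᵥ x) := by gcongr; exact sq_norm_le_dotProduct_self x
    _ ≤ x ⬝ᵥ e := by linarith

theorem dotProduct_pos_of_mem_interior {e z : Fin n → ℝ} (he : e ∈ dualCone C) (he0 : e ≠ 0)
    (hz : z ∈ interior C) : 0 < z ⬝ᵥ e := by
  obtain ⟨ε, hε, hball⟩ := Metric.mem_nhds_iff.mp (mem_interior_iff_mem_nhds.mp hz)
  have hnorm : 0 < ‖e‖ := norm_pos_iff.mpr he0
  set t := ε / 2 / ‖e‖
  have hmem : z - t • e ∈ C := hball (by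
    rw [Metric.mem_ball, dist_eq_norm, sub_sub_cancel_left, norm_neg, norm_smul,
      Real.norm_eq_abs, abs_of_pos (by positivity), div_mul_cancel₀ _ hnorm.ne']
    linarith)
  have hdual := he _ hmem
  rw [sub_dotProduct, smul_dotProduct, smul_eq_mul] at hdual
  have hee : 0 < e ⬝ᵥ e := lt_of_lt_of_le (by positivity) (sq_norm_le_dotProduct_self e)
  nlinarith [mul_pos (show 0 < t by positivity) hee]

theorem isCompact_crossSec {K : Set (Fin n → ℝ)} (hK : IsClosed K) (hKC : K ⊆ C)
    {e : Fin n → ℝ} (he : e ∈ interior (dualCone C)) : IsCompact (crossSec K e) := by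
  obtain ⟨m, hm, hmC⟩ := exists_pos_mul_norm_le_dotProduct he
  refine Metric.isCompact_of_isClosed_isBounded
    (hK.inter (isClosed_eq (continuous_id.dotProduct continuous_const) continuous_const))
    (isBounded_iff_forall_norm_le.mpr ⟨1 / m, fun x hx => ?_⟩)
  have hbound := hmC x (hKC hx.1)
  rw [hx.2] at hbound
  exact (le_div_iff₀' hm).mpr hbound

theorem exists_smul_sub_mem_of_isCompact
    (hCcone : ∀ x ∈ C, ∀ r : ℝ, 0 ≤ r → r • x ∈ C)
    {X Z : Set (Fin n → ℝ)} (hX : IsCompact X) (hXC : X ⊆ interior C)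
    (hZ : Bornology.IsBounded Z) :
    ∃ L : ℝ, 0 < L ∧ ∀ z ∈ Z, ∀ y ∈ X, L • y - z ∈ C := by
  obtain ⟨δ, hδ, hthick⟩ := hX.exists_cthickening_subset_open isOpen_interior hXC
  obtain ⟨R, hR, hRZ⟩ := hZ.exists_pos_norm_le
  refine ⟨R / δ, by positivity, fun z hz y hy => ?_⟩
  have hnear : y - (δ / R) • z ∈ C := interior_subset <| hthick <|
    Metric.mem_cthickening_of_dist_le _ y δ X hy (by
      rw [dist_eq_norm, sub_sub_cancel_left, norm_neg, norm_smul, Real.norm_eq_abs,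
        abs_of_pos (by positivity)]
      calc δ / R * ‖z‖ ≤ δ / R * R := mul_le_mul_of_nonneg_left (hRZ z hz) (by positivity)
        _ = δ := div_mul_cancel₀ _ hR.ne')
  convert hCcone _ hnear (R / δ) (by positivity) using 1
  rw [smul_sub, smul_smul, div_mul_div_cancel₀ hδ.ne', div_self hR.ne', one_smul]

end Cone

section Funk

open scoped Pointwise

variable {n : ℕ} {C : Set (Fin n → ℝ)}

theorem dotProduct_le_sInf_funk {e y z : Fin n → ℝ} (he : e ∈ dualCone C)
    (hy : y ⬝ᵥ e = 1) {L : ℝ} (hL : 0 < L) (hLyz : L • y - z ∈ C) :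
    z ⬝ᵥ e ≤ sInf {l : ℝ | 0 < l ∧ l • y - z ∈ C} := by
  refine le_csInf ⟨L, hL, hLyz⟩ fun l hl => ?_
  have hdual := he _ hl.2
  rw [sub_dotProduct, smul_dotProduct, hy, smul_eq_mul, mul_one] at hdual
  linarith

theorem exists_uniform_bounds_sInf_funk
    (hCcone : ∀ x ∈ C, ∀ r : ℝ, 0 ≤ r → r • x ∈ C)
    {e : Fin n → ℝ} (he : e ∈ dualCone C) (he0 : e ≠ 0) {X Z : Set (Fin n → ℝ)}
    (hX : IsCompact X) (hXC : X ⊆ interior C) (hXe : ∀ y ∈ X, y ⬝ᵥ e = 1)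
    (hZ : IsCompact Z) (hZC : Z ⊆ interior C) :
    ∃ m L : ℝ, 0 < m ∧ 0 < L ∧ ∀ z ∈ Z, ∀ y ∈ X,
      m ≤ sInf {l : ℝ | 0 < l ∧ l • y - z ∈ C} ∧ L • y - z ∈ C := by
  obtain ⟨m, hm, hmZ⟩ : ∃ m : ℝ, 0 < m ∧ ∀ z ∈ Z, m ≤ z ⬝ᵥ e :=
    hZ.exists_forall_le' (continuous_id.dotProduct continuous_const).continuousOn
      fun z hz => dotProduct_pos_of_mem_interior he he0 (hZC hz)
  obtain ⟨L, hL, hLZ⟩ := exists_smul_sub_mem_of_isCompact hCcone hX hXC hZ.isBounded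
  exact ⟨m, L, hm, hL, fun z hz y hy =>
    ⟨(hmZ z hz).trans (dotProduct_le_sInf_funk he (hXe y hy) hL (hLZ z hz y hy)),
      hLZ z hz y hy⟩⟩

theorem funk_mem_Icc {y z : Fin n → ℝ} {m L : ℝ} (hm : 0 < m)
    (hmS : m ≤ sInf {l : ℝ | 0 < l ∧ l • y - z ∈ C}) (hL : 0 < L)
    (hLyz : L • y - z ∈ C) :
    funk C z y ∈ Icc (Real.log m) (Real.log L) :=
  ⟨Real.log_le_log hm hmS, Real.log_le_log (hm.trans_le hmS)
    (csInf_le ⟨0, fun _ hl => hl.1.le⟩ ⟨hL, hLyz⟩)⟩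

theorem funk_inv_smul_left (hCcone : ∀ x ∈ C, ∀ r : ℝ, 0 ≤ r → r • x ∈ C)
    {y z : Fin n → ℝ} {c : ℝ} (hc : 0 < c)
    (hpos : sInf {l : ℝ | 0 < l ∧ l • y - z ∈ C} ≠ 0) :
    funk C (c⁻¹ • z) y = funk C z y - Real.log c := by
  have hrescale : ∀ l : ℝ, c • (l • y - c⁻¹ • z) = (c * l) • y - z := fun l => by
    rw [smul_sub, smul_smul, smul_smul, mul_inv_cancel₀ hc.ne', one_smul]
  have hset : {l : ℝ | 0 < l ∧ l • y - c⁻¹ • z ∈ C}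
      = c⁻¹ • {l : ℝ | 0 < l ∧ l • y - z ∈ C} := by
    ext l
    rw [Set.mem_smul_set_iff_inv_smul_mem₀ (inv_ne_zero hc.ne'), inv_inv, smul_eq_mul,
      mem_ofPred_eq, mem_ofPred_eq, ← hrescale, mul_pos_iff_of_pos_left hc]
    refine and_congr_right fun _ => ⟨fun h => hCcone _ h c hc.le, fun h => ?_⟩
    simpa [smul_smul, inv_mul_cancel₀ hc.ne'] using hCcone _ h c⁻¹ (inv_nonneg.mpr hc.le)
  unfold funk
  rw [hset, Real.sInf_smul_of_nonneg (inv_nonneg.mpr hc.le), smul_eq_mul,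
    Real.log_mul (inv_ne_zero hc.ne') hpos, Real.log_inv]
  ring

theorem log_add_Ih_inv_smul (hCcone : ∀ x ∈ C, ∀ r : ℝ, 0 ≤ r → r • x ∈ C)
    {Xh : Finset (Fin n → ℝ)} (hne : Xh.Nonempty) (w : (Fin n → ℝ) → ℝ)
    {z : Fin n → ℝ} {c : ℝ} (hc : 0 < c)
    (hpos : ∀ y ∈ Xh, sInf {l : ℝ | 0 < l ∧ l • y - z ∈ C} ≠ 0) :
    Real.log c + Ih C Xh hne w (c⁻¹ • z) = Xh.inf' hne (fun y => w y + funk C z y) := by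
  have hshift : Ih C Xh hne w (c⁻¹ • z)
      = Xh.inf' hne (fun y => w y + funk C z y + -Real.log c) := by
    refine Finset.inf'_congr hne rfl fun y hy => ?_
    rw [funk_inv_smul_left hCcone hc (hpos y hy)]
    ring
  have hconst := map_finset_inf' (OrderIso.addRight (-Real.log c)) hne
    (fun y => w y + funk C z y)
  simp only [OrderIso.addRight_apply, Function.comp_def] at hconst
  rw [hshift, ← hconst]
  ring

end Funk

theorem stmt_18_general
    {n : ℕ} (C : Set (Fin n → ℝ))
    (hCcone : ∀ x ∈ C, ∀ r : ℝ, 0 ≤ r → r • x ∈ C)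
    (estar : Fin n → ℝ) (hestar : estar ∈ interior (dualCone C))
    {E : Type*}
    (A B : Set E) (hAne : A.Nonempty)
    (hBne : B.Nonempty)
    (T : E → E → (Fin n → ℝ) → (Fin n → ℝ))
    (hTmaps : ∀ a ∈ A, ∀ b ∈ B, ∀ x ∈ interior C, T a b x ∈ interior C)
    (hcomp : ∀ Kc : Set (Fin n → ℝ), Kc ⊆ interior C → IsCompact Kc →
      IsCompact {z | ∃ a ∈ A, ∃ b ∈ B, ∃ x ∈ Kc, z = T a b x})
    (K : Set (Fin n → ℝ)) (hKclosed : IsClosed K)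
    (hKC : K ⊆ C)
    (hXsub : crossSec K estar ⊆ interior C)
    (Xh : Finset (Fin n → ℝ)) (hXhne : Xh.Nonempty)
    (hXhsub : ↑Xh ⊆ crossSec K estar)
    (w : (Fin n → ℝ) → ℝ) (l : ℝ)
    (heig : ∀ x ∈ Xh, Fop A B T estar (Ih C Xh hXhne w) x = l + w x) :
    sInf (MSet C K estar A B T) ≤ l ∧ l ≤ sSup (MSet C K estar A B T) ∧
    hsemi Xh hXhne w ≤ sSup (MSet C K estar A B T) - l ∧
    sSup (MSet C K estar A B T) - l ≤
      sSup (MSet C K estar A B T) - sInf (MSet C K estar A B T) := by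
  set X := crossSec K estar
  set Z := {z | ∃ a ∈ A, ∃ b ∈ B, ∃ x ∈ X, z = T a b x}
  have hestar0 : estar ≠ 0 := by
    rintro rfl
    obtain ⟨x, hx⟩ := hXhne
    simpa using (hXhsub hx).2
  have hX : IsCompact X := isCompact_crossSec hKclosed hKC hestar
  have hZC : Z ⊆ interior C := by
    rintro _ ⟨a, ha, b, hb, x, hx, rfl⟩
    exact hTmaps a ha b hb x (hXsub hx)
  obtain ⟨m, L, hm, hL, hbounds⟩ := exists_uniform_bounds_sInf_funk hCcone
    (interior_subset hestar) hestar0 hX hXsub (fun y hy => hy.2) (hcomp X hXsub hX) hZC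
  have hM : MSet C K estar A B T ⊆ Icc (Real.log m) (Real.log L) := by
    rintro _ ⟨a, ha, b, hb, x, hx, y, hy, rfl⟩
    obtain ⟨hmS, hLyz⟩ := hbounds _ ⟨a, ha, b, hb, x, hx, rfl⟩ y hy
    exact funk_mem_Icc hm hmS hL hLyz
  have hvalue : ∀ x ∈ Xh, l + w x ∈ Icc (Xh.inf' hXhne w + sInf (MSet C K estar A B T))
      (Xh.inf' hXhne w + sSup (MSet C K estar A B T)) := by
    intro x hx
    have := hAne.to_subtype
    have := hBne.to_subtype
    rw [← heig x hx]
    refine ciInf_mem_Icc_of_forall fun a => ciSup_mem_Icc_of_forall fun b => ?_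
    have hz : T a b x ∈ Z := ⟨a, a.2, b, b.2, x, hXhsub hx, rfl⟩
    rw [log_add_Ih_inv_smul hCcone hXhne w
      (dotProduct_pos_of_mem_interior (interior_subset hestar) hestar0 (hZC hz))
      fun y hy => (hm.trans_le (hbounds _ hz y (hXhsub hy)).1).ne']
    exact Finset.inf'_add_mem_Icc hXhne w fun y hy =>
      mem_Icc_csInf_csSup hM ⟨a, a.2, b, b.2, x, hXhsub hx, y, hXhsub hy, rfl⟩
  obtain ⟨hl, hsemi_le⟩ := Finset.mem_Icc_and_sup'_sub_inf'_le hXhne w hvalue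
  exact ⟨hl.1, hl.2, hsemi_le, by linarith [hl.1]⟩

/-- bounds on the eigenvalue and the Hilbert seminorm of an eigenvector
of the discretized Shapley operator `F̂_h^+`, in terms of `M⁺` and `M⁻`. -/
theorem stmt_18
    {n : ℕ} (C : Set (Fin n → ℝ))
    (hCclosed : IsClosed C) (hCconv : Convex ℝ C)
    (hCcone : ∀ x ∈ C, ∀ r : ℝ, 0 ≤ r → r • x ∈ C)
    (hCpointed : ∀ x ∈ C, -x ∈ C → x = 0)
    (estar : Fin n → ℝ) (hestar : estar ∈ interior (dualCone C))
    {E : Type*} [MetricSpace E]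
    (A B : Set E) (hAc : IsCompact A) (hAne : A.Nonempty)
    (hBc : IsCompact B) (hBne : B.Nonempty)
    (T : E → E → (Fin n → ℝ) → (Fin n → ℝ))
    (hTmaps : ∀ a ∈ A, ∀ b ∈ B, ∀ x ∈ interior C, T a b x ∈ interior C)
    (hTnexp : ∀ a ∈ A, ∀ b ∈ B, ∀ x ∈ interior C, ∀ y ∈ interior C,
      funk C (T a b x) (T a b y) ≤ funk C x y)
    (hconta : ∀ x ∈ interior C, ∀ b ∈ B, ContinuousOn (fun a => T a b x) A)
    (hcontb : ∀ x ∈ interior C, ∀ a ∈ A, ContinuousOn (fun b => T a b x) B)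
    (hcomp : ∀ Kc : Set (Fin n → ℝ), Kc ⊆ interior C → IsCompact Kc →
      IsCompact {z | ∃ a ∈ A, ∃ b ∈ B, ∃ x ∈ Kc, z = T a b x})
    (K : Set (Fin n → ℝ)) (hKclosed : IsClosed K)
    (hKcone : ∀ x ∈ K, ∀ r : ℝ, 0 ≤ r → r • x ∈ K) (hKC : K ⊆ C)
    (hTK : ∀ a ∈ A, ∀ b ∈ B, ∀ x ∈ K, T a b x ∈ K)
    (hXsub : crossSec K estar ⊆ interior C)
    (hXne : (crossSec K estar).Nonempty)
    (h : ℝ) (hh : 0 < h)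
    (Xh : Finset (Fin n → ℝ)) (hXhne : Xh.Nonempty)
    (hXhsub : ↑Xh ⊆ crossSec K estar)
    (hcover : ∀ x ∈ crossSec K estar, ∃ y ∈ Xh, funk C x y + funk C y x < h)
    (w : (Fin n → ℝ) → ℝ) (l : ℝ)
    (hwLip : ∀ x ∈ Xh, ∀ y ∈ Xh, w x - w y ≤ funk C x y)
    (heig : ∀ x ∈ Xh, Fop A B T estar (Ih C Xh hXhne w) x = l + w x) :
    sInf (MSet C K estar A B T) ≤ l ∧ l ≤ sSup (MSet C K estar A B T) ∧
    hsemi Xh hXhne w ≤ sSup (MSet C K estar A B T) - l ∧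
    sSup (MSet C K estar A B T) - l ≤
      sSup (MSet C K estar A B T) - sInf (MSet C K estar A B T) :=
  stmt_18_general C hCcone estar hestar A B hAne hBne T hTmaps hcomp K hKclosed hKC hXsub Xh hXhne
    hXhsub w l heig
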